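/- arXiv:1908.04815 — 2 statements merged into one kernel-verified Lean document; each statement's English description precedes it below -/
import Mathlib

section
/- For α > 1/2 and a > 0, define I_α(a) = ∫_a^∞ (1+r²)^{−α} dr. Then for every α > 1/2 and every a > 0, 2α/(2α−1) ≤ I_α(a) / ( (1+a²) · I_{α+1}(a) ) ≤ (2α+1)/(2α−1). -/
open MeasureTheory

/-- `I_α(a) = ∫_a^∞ (1+r²)^{−α} dr`. -/
noncomputable def Iint (α a : ℝ) : ℝ := ∫ r in Set.Ioi a, (1 + r ^ 2) ^ (-α)

/-!
Since `d/dr [r (1+r²)^{-α}] = (1-2α)(1+r²)^{-α} + 2α(1+r²)^{-α-1}`, integration by parts gives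
`(2α-1) I_α(a) = 2α I_{α+1}(a) + a(1+a²)^{-α}`, so both bounds amount to comparing
`I_{α+1}(a)` with the boundary term. From above, `(1+r²)^{-α-1} ≤ (r/a)(1+r²)^{-α-1}` on
`(a, ∞)`, and the right side has the primitive `-(1+r²)^{-α}/(2αa)`. From below,
`r(1+r²)^{-α}/(1+(2α+1)r²)` has derivative `2(1+r²)^{-α}/(1+(2α+1)r²)² - (1+r²)^{-α-1}`,
so minus its derivative is at most the integrand.
-/

open Set Filter Topology Real

section ImproperComparison

variable {f h h' : ℝ → ℝ} {a : ℝ}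

theorem setIntegral_Ioi_le_of_hasDerivAt (hderiv : ∀ x ∈ Ici a, HasDerivAt h (h' x) x)
    (hh' : IntegrableOn h' (Ioi a)) (hlim : Tendsto h atTop (𝓝 0))
    (hf : IntegrableOn f (Ioi a)) (hle : ∀ x ∈ Ioi a, f x ≤ -h' x) :
    ∫ x in Ioi a, f x ≤ h a :=
  calc ∫ x in Ioi a, f x ≤ ∫ x in Ioi a, -h' x :=
        setIntegral_mono_on hf hh'.neg measurableSet_Ioi hle
    _ = h a := by rw [integral_neg, integral_Ioi_of_hasDerivAt_of_tendsto' hderiv hh' hlim]; ring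

theorem le_setIntegral_Ioi_of_hasDerivAt (hderiv : ∀ x ∈ Ici a, HasDerivAt h (h' x) x)
    (hh' : IntegrableOn h' (Ioi a)) (hlim : Tendsto h atTop (𝓝 0))
    (hf : IntegrableOn f (Ioi a)) (hle : ∀ x ∈ Ioi a, -h' x ≤ f x) :
    h a ≤ ∫ x in Ioi a, f x :=
  calc h a = ∫ x in Ioi a, -h' x := by
        rw [integral_neg, integral_Ioi_of_hasDerivAt_of_tendsto' hderiv hh' hlim]; ring
    _ ≤ ∫ x in Ioi a, f x := setIntegral_mono_on hh'.neg hf measurableSet_Ioi hle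

end ImproperComparison

section OneAddSqRpow

variable {β : ℝ}

theorem integrable_one_add_sq_rpow_neg (hβ : 1 / 2 < β) :
    Integrable fun r : ℝ => (1 + r ^ 2) ^ (-β) := by
  have := integrable_rpow_neg_one_add_norm_sq (E := ℝ) (μ := volume) (r := 2 * β)
    (by simp; linarith)
  simpa [neg_div] using this

theorem one_add_sq_mul_rpow_neg_add_one (β r : ℝ) :
    (1 + r ^ 2) * (1 + r ^ 2) ^ (-(β + 1)) = (1 + r ^ 2) ^ (-β) := by
  conv_lhs => enter [1]; rw [← rpow_one (1 + r ^ 2)]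
  rw [← rpow_add (by positivity)]
  ring_nf

theorem hasDerivAt_one_add_sq_rpow_neg (β r : ℝ) :
    HasDerivAt (fun r : ℝ => (1 + r ^ 2) ^ (-β)) (-(2 * β * r * (1 + r ^ 2) ^ (-(β + 1)))) r := by
  have h := ((hasDerivAt_pow 2 r).const_add 1).rpow_const (p := -β) (Or.inl (by positivity))
  convert h using 1
  ring_nf

theorem tendsto_one_add_sq_rpow_neg (hβ : 0 < β) :
    Tendsto (fun r : ℝ => (1 + r ^ 2) ^ (-β)) atTop (𝓝 0) :=
  (tendsto_rpow_neg_atTop hβ).comp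
    (tendsto_atTop_add_const_left _ 1 (tendsto_pow_atTop two_ne_zero))

theorem tendsto_mul_one_add_sq_rpow_neg (hβ : 1 / 2 < β) :
    Tendsto (fun r : ℝ => r * (1 + r ^ 2) ^ (-β)) atTop (𝓝 0) := by
  refine squeeze_zero' ?_ ?_ (tendsto_one_add_sq_rpow_neg (β := β - 1 / 2) (by linarith))
  · filter_upwards [eventually_ge_atTop 0] with r hr using by positivity
  · filter_upwards with r
    calc r * (1 + r ^ 2) ^ (-β) ≤ (1 + r ^ 2) ^ (1 / 2 : ℝ) * (1 + r ^ 2) ^ (-β) := by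
          gcongr
          rw [← sqrt_eq_rpow]
          exact le_sqrt_of_sq_le (by linarith)
      _ = (1 + r ^ 2) ^ (-(β - 1 / 2)) := by
          rw [← rpow_add (by positivity)]; ring_nf

end OneAddSqRpow

section Iint

variable {α : ℝ}

theorem Iint_pos (hα : 1 / 2 < α) (a : ℝ) : 0 < Iint α a := by
  have hpos : ∀ r : ℝ, 0 < (1 + r ^ 2) ^ (-α) := fun r => by positivity
  refine (setIntegral_pos_iff_support_of_nonneg_ae
    (ae_of_all _ fun r => (hpos r).le) (integrable_one_add_sq_rpow_neg hα).integrableOn).2 ?_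
  rw [Function.support_eq_univ fun r => (hpos r).ne', univ_inter]
  exact Measure.measure_Ioi_pos _ a

theorem Iint_recurrence (hα : 1 / 2 < α) (a : ℝ) :
    (2 * α - 1) * Iint α a = 2 * α * Iint (α + 1) a + a * (1 + a ^ 2) ^ (-α) := by
  have hI := (integrable_one_add_sq_rpow_neg hα).integrableOn (s := Ioi a)
  have hJ := (integrable_one_add_sq_rpow_neg (β := α + 1) (by linarith)).integrableOn (s := Ioi a)
  have hderiv : ∀ r ∈ Ici a, HasDerivAt (fun r : ℝ => r * (1 + r ^ 2) ^ (-α))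
      ((1 - 2 * α) * (1 + r ^ 2) ^ (-α) + 2 * α * (1 + r ^ 2) ^ (-(α + 1))) r := by
    intro r _
    refine ((hasDerivAt_id' r).mul (hasDerivAt_one_add_sq_rpow_neg α r)).congr_deriv ?_
    linear_combination -2 * α * one_add_sq_mul_rpow_neg_add_one α r
  have hftc := integral_Ioi_of_hasDerivAt_of_tendsto' hderiv
    ((hI.const_mul (1 - 2 * α)).add (hJ.const_mul (2 * α))) (tendsto_mul_one_add_sq_rpow_neg hα)
  rw [integral_add (hI.const_mul _) (hJ.const_mul _), integral_const_mul,
    integral_const_mul] at hftc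
  rw [Iint, Iint]
  linarith

theorem two_mul_mul_Iint_add_one_le (hα : 0 < α) {a : ℝ} (ha : 0 ≤ a) :
    2 * α * a * Iint (α + 1) a ≤ (1 + a ^ 2) ^ (-α) := by
  have hderiv : ∀ r ∈ Ici a, HasDerivAt (fun r : ℝ => (1 + r ^ 2) ^ (-α))
      (-(2 * α * r * (1 + r ^ 2) ^ (-(α + 1)))) r :=
    fun r _ => hasDerivAt_one_add_sq_rpow_neg α r
  have hlim := tendsto_one_add_sq_rpow_neg hα
  have hJ := (integrable_one_add_sq_rpow_neg (β := α + 1) (by linarith)).integrableOn (s := Ioi a)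
  rw [Iint, ← integral_const_mul]
  refine setIntegral_Ioi_le_of_hasDerivAt hderiv ?_ hlim (hJ.const_mul _) fun r hr => ?_
  · exact integrableOn_Ioi_deriv_of_nonpos' hderiv
      (fun r hr => by have : 0 < r := ha.trans_lt hr; exact neg_nonpos.2 (by positivity)) hlim
  · rw [neg_neg]
    gcongr
    exact hr.out.le

theorem hasDerivAt_mul_one_add_sq_rpow_neg_div (hα : 0 ≤ 2 * α + 1) (r : ℝ) :
    HasDerivAt (fun r : ℝ => r * (1 + r ^ 2) ^ (-α) / (1 + (2 * α + 1) * r ^ 2))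
      (2 * (1 + r ^ 2) ^ (-α) / (1 + (2 * α + 1) * r ^ 2) ^ 2 - (1 + r ^ 2) ^ (-(α + 1))) r := by
  have hD : 0 < 1 + (2 * α + 1) * r ^ 2 := by positivity
  have hnum := (hasDerivAt_id' r).mul (hasDerivAt_one_add_sq_rpow_neg α r)
  have hden : HasDerivAt (fun r : ℝ => 1 + (2 * α + 1) * r ^ 2) ((2 * α + 1) * (2 * r)) r := by
    simpa using ((hasDerivAt_pow 2 r).const_mul (2 * α + 1)).const_add 1
  refine (hnum.div hden hD.ne').congr_deriv ?_
  simp only [Pi.mul_apply]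
  rw [← one_add_sq_mul_rpow_neg_add_one α r]
  generalize (1 + r ^ 2) ^ (-(α + 1)) = p
  field_simp [hD.ne']
  ring

theorem mul_rpow_le_Iint_add_one (hα : 1 / 2 < α) (a : ℝ) :
    a * (1 + a ^ 2) ^ (-α) ≤ (1 + (2 * α + 1) * a ^ 2) * Iint (α + 1) a := by
  have hc : 0 ≤ 2 * α + 1 := by linarith
  have hD : ∀ r : ℝ, 1 ≤ 1 + (2 * α + 1) * r ^ 2 := fun r =>
    le_add_of_nonneg_right (by positivity)
  have hI := integrable_one_add_sq_rpow_neg hα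
  have hJ := (integrable_one_add_sq_rpow_neg (β := α + 1) (by linarith)).integrableOn (s := Ioi a)
  have hcorr : Integrable fun r : ℝ => 2 * (1 + r ^ 2) ^ (-α) / (1 + (2 * α + 1) * r ^ 2) ^ 2 := by
    refine (hI.const_mul 2).mono' (Measurable.aestronglyMeasurable (by fun_prop))
      (ae_of_all _ fun r => ?_)
    rw [norm_of_nonneg (by positivity)]
    exact div_le_self (by positivity) (one_le_pow₀ (hD r))
  have hlim : Tendsto (fun r : ℝ => r * (1 + r ^ 2) ^ (-α) / (1 + (2 * α + 1) * r ^ 2))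
      atTop (𝓝 0) := by
    refine squeeze_zero' ?_ ?_ (tendsto_mul_one_add_sq_rpow_neg hα)
    · filter_upwards [eventually_ge_atTop 0] with r hr
      exact div_nonneg (by positivity) (zero_le_one.trans (hD r))
    · filter_upwards [eventually_ge_atTop 0] with r hr
      exact div_le_self (by positivity) (hD r)
  rw [← div_le_iff₀' (zero_lt_one.trans_le (hD a)), Iint]
  refine le_setIntegral_Ioi_of_hasDerivAt
    (fun r _ => hasDerivAt_mul_one_add_sq_rpow_neg_div hc r)
    (hcorr.integrableOn.sub hJ) hlim hJ fun r _ => ?_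
  have : 0 ≤ 2 * (1 + r ^ 2) ^ (-α) / (1 + (2 * α + 1) * r ^ 2) ^ 2 := by positivity
  linarith

end Iint

/-- The two-sided bound
`2α/(2α−1) ≤ I_α(a)/((1+a²) I_{α+1}(a)) ≤ (2α+1)/(2α−1)`. -/
theorem Iint_ratio_bounds (α a : ℝ) (hα : 1 / 2 < α) (ha : 0 < a) :
    2 * α / (2 * α - 1) ≤ Iint α a / ((1 + a ^ 2) * Iint (α + 1) a) ∧
    Iint α a / ((1 + a ^ 2) * Iint (α + 1) a) ≤ (2 * α + 1) / (2 * α - 1) := by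
  have hJ : 0 < Iint (α + 1) a := Iint_pos (by linarith) a
  have hc : 0 < 2 * α - 1 := by linarith
  have hden : 0 < (1 + a ^ 2) * Iint (α + 1) a := by positivity
  have hrec := Iint_recurrence hα a
  have hlower := mul_le_mul_of_nonneg_left
    (two_mul_mul_Iint_add_one_le (α := α) (by linarith) ha.le) ha.le
  have hupper := mul_rpow_le_Iint_add_one hα a
  constructor
  · rw [div_le_div_iff₀ hc hden]
    linarith
  · rw [div_le_div_iff₀ hden hc]
    linarith
end

section
/- Let T < 0 be a real number and let n ≥ 62 be an integer. Define c_q = ∫_0^∞ (1+(t−T)²)^{(5+2q−n)/2} dt for q = 0, 1, 2, and set a₀ = ((n+3)c₁ / (2(n−7)c₀)) · ( 3 + √( 9 − 8((n+7)(n−7)/((n+3)(n−9))) · c₀c₂/c₁² ) ). Then − (2(n+3)/(n−5)) c₀ a₀ + (3(n+3)(n+5)/((n−5)(n−7))) c₁ < 0. (This quantity is the value J(1) of the auxiliary function J at s = 1, so J(1) < 0.) -/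
/-!
Write `I k = ∫₀^∞ (1 + (t - T)²)^(-k) dt` and `k = (n - 7)/2`, so that `c q = I (k + 1 - q)`.
Integrating `d/dt [(t - T)(1 + (t - T)²)^(-k)]` over `(0, ∞)` gives the recurrence
`(2k - 1) I k = b + 2k I (k + 1)` with boundary term `b = -T (1 + T²)^(-k)`, and since
`(t - T)² ≥ T²` for `t > 0` when `T < 0`, also `(1 + T²)² I (k + 2) ≤ I k`.
For fixed `c₁` the recurrences make `c₀` and `c₂` affine in `b`, so `c₀ c₂` is a concave quadratic
in `b`, while the comparison bounds `b`. Maximising under that constraint reduces everything to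
polynomial inequalities in `n` and `C = 1 + T²`, which yield
`8 (n+3)(n+7)(n-7) c₀ c₂ < 9 (n+1)(n+5)(n-9) c₁²`. Since `9 (n+1)(n+5) = 9 (n+3)² - 36`, this says
that the square root in `a₀` exceeds `6 / (n + 3)`, which is exactly `J(1) < 0`.
-/

open MeasureTheory Set Filter Topology

noncomputable def bracketIntegral (T k : ℝ) : ℝ := ∫ t in Ioi 0, (1 + (t - T) ^ 2) ^ (-k)

lemma integrable_one_add_sub_sq_rpow_neg (T : ℝ) {k : ℝ} (hk : 1 / 2 < k) :
    Integrable fun t : ℝ => (1 + (t - T) ^ 2) ^ (-k) := by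
  have h := (integrable_rpow_neg_one_add_norm_sq (E := ℝ) (μ := volume) (r := 2 * k)
    (by simp; linarith)).comp_sub_right T
  simpa [Real.norm_eq_abs, sq_abs, neg_div, mul_div_cancel_left₀] using h

lemma bracketIntegral_pos (T : ℝ) {k : ℝ} (hk : 1 / 2 < k) : 0 < bracketIntegral T k := by
  have hf : ∀ t : ℝ, 0 < (1 + (t - T) ^ 2) ^ (-k) := fun t => by positivity
  rw [bracketIntegral, setIntegral_pos_iff_support_of_nonneg_ae
    (.of_forall fun t => (hf t).le) (integrable_one_add_sub_sq_rpow_neg T hk).integrableOn,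
    Function.support_eq_univ fun t => (hf t).ne', univ_inter]
  simp

lemma pow_mul_bracketIntegral_add_le {T : ℝ} (hT : T ≤ 0) {k : ℝ} (hk : 1 / 2 < k) (m : ℕ) :
    (1 + T ^ 2) ^ m * bracketIntegral T (k + m) ≤ bracketIntegral T k := by
  rw [bracketIntegral, bracketIntegral, ← integral_const_mul]
  have hkm : 1 / 2 < k + m := by linarith [m.cast_nonneg (α := ℝ)]
  refine setIntegral_mono_on
    ((integrable_one_add_sub_sq_rpow_neg T hkm).const_mul _).integrableOn
    (integrable_one_add_sub_sq_rpow_neg T hk).integrableOn measurableSet_Ioi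
    fun t (ht : 0 < t) => ?_
  have hpos : 0 < 1 + (t - T) ^ 2 := by positivity
  have hle : 1 + T ^ 2 ≤ 1 + (t - T) ^ 2 := by nlinarith
  calc (1 + T ^ 2) ^ m * (1 + (t - T) ^ 2) ^ (-(k + m))
      ≤ (1 + (t - T) ^ 2) ^ m * (1 + (t - T) ^ 2) ^ (-(k + m)) := by gcongr
    _ = (1 + (t - T) ^ 2) ^ (-k) := by
        rw [← Real.rpow_natCast, ← Real.rpow_add hpos]; ring_nf

lemma hasDerivAt_mul_one_add_sq_rpow_neg (k x : ℝ) :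
    HasDerivAt (fun x : ℝ => x * (1 + x ^ 2) ^ (-k))
      ((1 - 2 * k) * (1 + x ^ 2) ^ (-k) + 2 * k * (1 + x ^ 2) ^ (-(k + 1))) x := by
  have hpos : 0 < 1 + x ^ 2 := by positivity
  have h := (hasDerivAt_id' x).mul
    (((hasDerivAt_pow 2 x).const_add 1).rpow_const (p := -k) (Or.inl hpos.ne'))
  refine h.congr_deriv ?_
  have hsplit : (1 + x ^ 2) ^ (-k) = (1 + x ^ 2) * (1 + x ^ 2) ^ (-k - 1) := by
    conv_lhs => rw [show -k = 1 + (-k - 1) by ring, Real.rpow_add hpos, Real.rpow_one]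
  rw [hsplit, show -(k + 1) = -k - 1 by ring]
  push_cast; ring

lemma tendsto_mul_one_add_sq_rpow_neg_atTop {k : ℝ} (hk : 1 / 2 < k) :
    Tendsto (fun x : ℝ => x * (1 + x ^ 2) ^ (-k)) atTop (𝓝 0) := by
  have hpow : Tendsto (fun x : ℝ => x ^ (1 - 2 * k)) atTop (𝓝 0) := by
    simpa using tendsto_rpow_neg_atTop (y := 2 * k - 1) (by linarith)
  refine squeeze_zero' ?_ ?_ hpow
  · filter_upwards [eventually_ge_atTop 0] with x hx using by positivity
  · filter_upwards [eventually_gt_atTop 0] with x hx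
    calc x * (1 + x ^ 2) ^ (-k) ≤ x * (x ^ 2) ^ (-k) := by
          refine mul_le_mul_of_nonneg_left ?_ hx.le
          exact Real.rpow_le_rpow_of_nonpos (by positivity) (by linarith) (by linarith)
      _ = x ^ (1 - 2 * k) := by
          rw [← Real.rpow_natCast, ← Real.rpow_mul hx.le, sub_eq_add_neg, Real.rpow_add hx,
            Real.rpow_one]
          push_cast; ring_nf

lemma bracketIntegral_recurrence (T : ℝ) {k : ℝ} (hk : 1 / 2 < k) :
    (2 * k - 1) * bracketIntegral T k
      = -T * (1 + T ^ 2) ^ (-k) + 2 * k * bracketIntegral T (k + 1) := by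
  have hint := integrable_one_add_sub_sq_rpow_neg T hk
  have hint' := integrable_one_add_sub_sq_rpow_neg T (k := k + 1) (by linarith)
  have hFTC := integral_Ioi_of_hasDerivAt_of_tendsto' (a := 0)
    (fun x _ => (hasDerivAt_mul_one_add_sq_rpow_neg k (x - T)).comp_sub_const x T)
    ((hint.const_mul _).add (hint'.const_mul _)).integrableOn
    ((tendsto_mul_one_add_sq_rpow_neg_atTop hk).comp
      (tendsto_atTop_add_const_right atTop (-T) tendsto_id))
  rw [integral_add (hint.const_mul _).integrableOn (hint'.const_mul _).integrableOn,
    integral_const_mul, integral_const_mul] at hFTC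
  rw [bracketIntegral, bracketIntegral]
  simp only [zero_sub, neg_sq] at hFTC
  linarith

lemma bracketIntegral_relations {T : ℝ} (hT : T ≤ 0) {k : ℝ} (hk : 3 / 2 < k) :
    (2 * k - 1) * bracketIntegral T k
        = -T * (1 + T ^ 2) ^ (-k) + 2 * k * bracketIntegral T (k + 1) ∧
      (2 * k - 3) * bracketIntegral T (k - 1)
        = (1 + T ^ 2) * (-T * (1 + T ^ 2) ^ (-k)) + (2 * k - 2) * bracketIntegral T k ∧
      (1 + T ^ 2) ^ 2 * (2 * k + 1) * bracketIntegral T (k + 1)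
        ≤ (1 + T ^ 2) * (-T * (1 + T ^ 2) ^ (-k)) + (2 * k + 2) * bracketIntegral T k := by
  have hC : 0 < 1 + T ^ 2 := by positivity
  have hshift : ∀ j : ℝ, (1 + T ^ 2) ^ (-(j - 1)) = (1 + T ^ 2) * (1 + T ^ 2) ^ (-j) := fun j => by
    rw [show -(j - 1) = 1 + -j by ring, Real.rpow_add hC, Real.rpow_one]
  have hprev := bracketIntegral_recurrence T (k := k - 1) (by linarith)
  rw [sub_add_cancel, hshift] at hprev
  have hnext := bracketIntegral_recurrence T (k := k + 1) (by linarith)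
  rw [add_assoc, one_add_one_eq_two] at hnext
  have hb := hshift (k + 1)
  rw [add_sub_cancel_right] at hb
  have hcmp := pow_mul_bracketIntegral_add_le hT (k := k) (by linarith) 2
  push_cast at hcmp
  refine ⟨bracketIntegral_recurrence T (by linarith), by linear_combination hprev, ?_⟩
  calc (1 + T ^ 2) ^ 2 * (2 * k + 1) * bracketIntegral T (k + 1)
      = (1 + T ^ 2) * (-T * (1 + T ^ 2) ^ (-k))
        + (2 * k + 2) * ((1 + T ^ 2) ^ 2 * bracketIntegral T (k + 2)) := by
        linear_combination (1 + T ^ 2) ^ 2 * hnext + T * (1 + T ^ 2) * hb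
    _ ≤ _ := by gcongr

section Polynomial

variable {N C : ℝ}

lemma vertex_value_lt_of_le_six_fifths (hN : 62 ≤ N) (h1 : 1 ≤ C) (h2 : C ≤ 6 / 5) :
    8 * (N + 3) * (N + 7) * ((N - 8) * C + (N - 9)) ^ 2
      < 36 * C * ((N + 1) * (N + 5) * (N - 9) * (N - 10)) := by
  have hM : 0 ≤ N - 62 := by linarith
  have at_one : 0 < 36 * ((N + 1) * (N + 5) * (N - 9) * (N - 10))
      - 8 * (N + 3) * (N + 7) * (2 * N - 17) ^ 2 := by
    nlinarith [pow_nonneg hM 4, pow_nonneg hM 3, pow_nonneg hM 2, hM]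
  have at_six_fifths : 0 < 36 * (6 / 5) * ((N + 1) * (N + 5) * (N - 9) * (N - 10))
      - 8 * (N + 3) * (N + 7) * ((N - 8) * (6 / 5) + (N - 9)) ^ 2 := by
    nlinarith [pow_nonneg hM 4, pow_nonneg hM 3, pow_nonneg hM 2, hM]
  -- the difference is convex in `C`, so its values at `1` and `6/5` bound it
  nlinarith [mul_nonneg (mul_nonneg (sub_nonneg.2 h1) (sub_nonneg.2 h2))
      (mul_nonneg (mul_nonneg (by linarith : (0 : ℝ) ≤ 8 * (N + 3)) (by linarith : (0 : ℝ) ≤ N + 7))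
        (sq_nonneg (N - 8))),
    mul_nonneg (sub_nonneg.2 h1) at_six_fifths.le, mul_nonneg (sub_nonneg.2 h2) at_one.le]

lemma constraint_le_vertex_of_six_fifths_le (hN : 62 ≤ N) (hC : 6 / 5 ≤ C) :
    2 * ((N - 7) * ((N - 8) * C + (N - 5)))
      ≤ ((N - 8) * C + (N - 9)) * ((N - 6) * C + (N - 7)) := by
  have hM : 0 ≤ N - 62 := by linarith
  have hd : 0 ≤ C - 6 / 5 := by linarith
  nlinarith [mul_nonneg hM hd, mul_nonneg (mul_nonneg hM hM) hd, mul_nonneg hM (mul_nonneg hd hd),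
    mul_nonneg (mul_nonneg hM hM) (mul_nonneg hd hd), mul_nonneg hd hd, mul_nonneg hM hM]

-- The value of `u (((N - 8) C + (N - 9)) v - C u)` at the end of the constraint of
-- `mul_sub_lt_of_constraint`, `u = (N - 7)((N - 8) C + (N - 5)) v / (C ((N - 6) C + (N - 7)))`,
-- with denominators cleared.
lemma constraint_value_lt_of_six_fifths_le (hN : 62 ≤ N) (hC : 6 / 5 ≤ C) :
    8 * (N + 3) * (N + 7) * (N - 7) * ((N - 8) * C + (N - 5))
        * ((N - 8) * (N - 6) * C ^ 2 + (N - 9) * (N - 6) * C - 4 * (N - 7))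
      < 9 * ((N + 1) * (N + 5) * (N - 9) * (N - 10)) * C * ((N - 6) * C + (N - 7)) ^ 2 := by
  have h : ∀ i j : ℕ, 0 ≤ (N - 62) ^ i * (C - 6 / 5) ^ j := fun i j =>
    mul_nonneg (pow_nonneg (by linarith) i) (pow_nonneg (by linarith) j)
  nlinarith [h 0 1, h 0 2, h 0 3, h 1 0, h 1 1, h 1 2, h 1 3, h 2 0, h 2 1, h 2 2, h 2 3,
    h 3 0, h 3 1, h 3 2, h 3 3, h 4 0, h 4 1, h 4 2, h 4 3, h 5 0, h 5 1, h 5 2, h 5 3,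
    h 6 0, h 6 1, h 6 2, h 6 3]

lemma mul_sub_lt_of_constraint (hN : 62 ≤ N) (hC : 1 < C) {u v : ℝ} (hv : 0 < v)
    (hu : C * ((N - 6) * C + (N - 7)) * u ≤ (N - 7) * ((N - 8) * C + (N - 5)) * v) :
    8 * (N + 3) * (N + 7) * (u * (((N - 8) * C + (N - 9)) * v - C * u))
      < 9 * ((N + 1) * (N + 5) * (N - 9) * (N - 10)) * v ^ 2 := by
  set K := (N - 8) * C + (N - 9)
  set D := (N - 6) * C + (N - 7)
  set E := (N - 7) * ((N - 8) * C + (N - 5))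
  have hv2 : 0 < v ^ 2 := by positivity
  have hNC : 0 < 8 * (N + 3) * (N + 7) := by nlinarith
  rcases le_or_gt C (6 / 5) with hC' | hC'
  · have hvertex : 4 * C * (u * (K * v - C * u)) ≤ K ^ 2 * v ^ 2 := by
      nlinarith [sq_nonneg (K * v - 2 * C * u)]
    have := mul_lt_mul_of_pos_right (vertex_value_lt_of_le_six_fifths hN hC.le hC') hv2
    refine lt_of_mul_lt_mul_left (a := 4 * C) ?_ (by linarith)
    nlinarith [mul_le_mul_of_nonneg_left hvertex hNC.le]
  · -- `u ↦ u (K v - C u)` increases up to `K v / (2C)`, and the constraint stops `u` before that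
    have hmono : (C * D * u) * (K * D * v - C * D * u) ≤ (E * v) * (K * D * v - E * v) := by
      have := mul_le_mul_of_nonneg_right (constraint_le_vertex_of_six_fifths_le hN hC'.le) hv.le
      nlinarith [mul_nonneg (sub_nonneg.2 hu) (by linarith : 0 ≤ K * D * v - E * v - C * D * u)]
    have := mul_lt_mul_of_pos_right (constraint_value_lt_of_six_fifths_le hN hC'.le) hv2
    refine lt_of_mul_lt_mul_left (a := C * D ^ 2) ?_ (mul_nonneg (by linarith) (sq_nonneg D))
    nlinarith [mul_le_mul_of_nonneg_left hmono hNC.le]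

lemma moment_ineq_of_relations {b c₀ c₁ c₂ : ℝ} (hN : 62 ≤ N) (hC : 1 < C) (hc₁ : 0 < c₁)
    (h₀ : (N - 8) * c₁ = b + (N - 7) * c₀) (h₂ : (N - 10) * c₂ = C * b + (N - 9) * c₁)
    (hcmp : C ^ 2 * (N - 6) * c₀ ≤ C * b + (N - 5) * c₁) :
    8 * (N + 3) * (N + 7) * (N - 7) * c₀ * c₂ < 9 * (N + 1) * (N + 5) * (N - 9) * c₁ ^ 2 := by
  have hu : C * ((N - 6) * C + (N - 7)) * ((N - 7) * c₀)
      ≤ (N - 7) * ((N - 8) * C + (N - 5)) * c₁ := by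
    have hgap : (N - 7) * ((N - 8) * C + (N - 5)) * c₁
          - C * ((N - 6) * C + (N - 7)) * ((N - 7) * c₀)
        = (N - 7) * (C * b + (N - 5) * c₁ - C ^ 2 * (N - 6) * c₀) := by
      linear_combination (N - 7) * C * h₀
    linarith [mul_nonneg (by linarith : (0 : ℝ) ≤ N - 7) (sub_nonneg.2 hcmp)]
  have hprod : (N - 7) * c₀ * (((N - 8) * C + (N - 9)) * c₁ - C * ((N - 7) * c₀))
      = (N - 7) * c₀ * ((N - 10) * c₂) := by
    linear_combination (N - 7) * c₀ * (C * h₀ - h₂)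
  have key := mul_sub_lt_of_constraint hN hC hc₁ hu
  rw [hprod] at key
  refine lt_of_mul_lt_mul_left (a := N - 10) ?_ (by linarith)
  linarith

end Polynomial

lemma J_one_neg_of_moment_ineq {N c₀ c₁ c₂ : ℝ} (hN : 9 < N) (hc₀ : 0 < c₀) (hc₁ : 0 < c₁)
    (h : 8 * (N + 3) * (N + 7) * (N - 7) * c₀ * c₂ < 9 * (N + 1) * (N + 5) * (N - 9) * c₁ ^ 2) :
    -(2 * (N + 3) / (N - 5)) * c₀ * ((N + 3) * c₁ / (2 * (N - 7) * c₀)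
        * (3 + Real.sqrt (9 - 8 * ((N + 7) * (N - 7) / ((N + 3) * (N - 9))) * (c₀ * c₂ / c₁ ^ 2))))
      + 3 * (N + 3) * (N + 5) / ((N - 5) * (N - 7)) * c₁ < 0 := by
  set s := Real.sqrt (9 - 8 * ((N + 7) * (N - 7) / ((N + 3) * (N - 9))) * (c₀ * c₂ / c₁ ^ 2))
  have hradicand : (6 / (N + 3)) ^ 2
      < 9 - 8 * ((N + 7) * (N - 7) / ((N + 3) * (N - 9))) * (c₀ * c₂ / c₁ ^ 2) := by
    have h₉ : 0 < N - 9 := by linarith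
    have hgap : 9 - 8 * ((N + 7) * (N - 7) / ((N + 3) * (N - 9))) * (c₀ * c₂ / c₁ ^ 2)
          - (6 / (N + 3)) ^ 2
        = (9 * (N + 1) * (N + 5) * (N - 9) * c₁ ^ 2 - 8 * (N + 3) * (N + 7) * (N - 7) * c₀ * c₂)
          / ((N + 3) ^ 2 * (N - 9) * c₁ ^ 2) := by
      field_simp
      ring
    have : 0 < (N + 3) ^ 2 * (N - 9) * c₁ ^ 2 := by positivity
    linarith [div_pos (sub_pos.2 h) this]
  have hs : 6 < (N + 3) * s := by
    rw [← div_lt_iff₀' (by linarith)]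
    exact Real.lt_sqrt_of_sq_lt hradicand
  have hJ : -(2 * (N + 3) / (N - 5)) * c₀ * ((N + 3) * c₁ / (2 * (N - 7) * c₀) * (3 + s))
      + 3 * (N + 3) * (N + 5) / ((N - 5) * (N - 7)) * c₁
      = (N + 3) * c₁ / ((N - 5) * (N - 7)) * (6 - (N + 3) * s) := by
    have : N - 5 ≠ 0 := by linarith
    have : N - 7 ≠ 0 := by linarith
    field_simp
    ring
  rw [hJ]
  exact mul_neg_of_pos_of_neg (by apply div_pos <;> nlinarith) (by linarith)

/-- For `T < 0`, `n ≥ 62` and the explicit choice of `a₀`,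
`−(2(n+3)/(n−5))c₀a₀ + (3(n+3)(n+5)/((n−5)(n−7)))c₁ < 0`, i.e. `J(1) < 0`. -/
theorem J_one_negative (T : ℝ) (hT : T < 0) (n : ℕ) (hn : 62 ≤ n)
    (c : ℕ → ℝ)
    (hc : ∀ m : ℕ, c m
      = ∫ t in Set.Ioi (0 : ℝ), (1 + (t - T) ^ 2) ^ ((5 + 2 * (m : ℝ) - (n : ℝ)) / 2))
    (a₀ : ℝ)
    (ha₀ : a₀ = (((n : ℝ) + 3) * c 1 / (2 * ((n : ℝ) - 7) * c 0))
      * (3 + Real.sqrt (9 - 8 * (((n : ℝ) + 7) * ((n : ℝ) - 7)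
          / (((n : ℝ) + 3) * ((n : ℝ) - 9))) * (c 0 * c 2 / c 1 ^ 2)))) :
    -(2 * ((n : ℝ) + 3) / ((n : ℝ) - 5)) * c 0 * a₀
      + (3 * ((n : ℝ) + 3) * ((n : ℝ) + 5) / (((n : ℝ) - 5) * ((n : ℝ) - 7))) * c 1 < 0 := by
  have hN : (62 : ℝ) ≤ n := by exact_mod_cast hn
  have hc_eq : ∀ (m : ℕ) (k : ℝ), k = ((n : ℝ) - 5) / 2 - m → c m = bracketIntegral T k := by
    rintro m k rfl
    rw [hc, bracketIntegral]
    congr 1 with t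
    ring_nf
  have hc₀ := hc_eq 0 (((n : ℝ) - 7) / 2 + 1) (by ring)
  have hc₁ := hc_eq 1 (((n : ℝ) - 7) / 2) (by ring)
  have hc₂ := hc_eq 2 (((n : ℝ) - 7) / 2 - 1) (by ring)
  obtain ⟨h₀, h₂, hcmp⟩ := bracketIntegral_relations hT.le (k := ((n : ℝ) - 7) / 2) (by linarith)
  simp only [← hc₀, ← hc₁, ← hc₂] at h₀ h₂ hcmp
  have hpos₀ : 0 < c 0 := by rw [hc₀]; exact bracketIntegral_pos T (by linarith)
  have hpos₁ : 0 < c 1 := by rw [hc₁]; exact bracketIntegral_pos T (by linarith)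
  have hC : 1 < 1 + T ^ 2 := by nlinarith
  rw [ha₀]
  refine J_one_neg_of_moment_ineq (by linarith) hpos₀ hpos₁
    (moment_ineq_of_relations (b := -T * (1 + T ^ 2) ^ (-(((n : ℝ) - 7) / 2))) hN hC hpos₁ ?_ ?_ ?_)
  · linear_combination h₀
  · linear_combination h₂
  · linear_combination hcmp
end
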